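/- Let q be a prime with q ≡ 1 or 23 (mod 24) (i.e. q ≡ ±1 (mod 24)). For every complex number s with Re(s) > 1, L(s, λ_q) = ζ(qs) ζ(s) · ∏_p ( 1 + ∑_{m=4}^{q-1} { ((m+1)/q) − (m/q) } · p^{-ms} ), where the product runs over all prime numbers p. -/

import Mathlib

open Filter

/-- `λ_q(n) = (τ(n)/q)` : the Legendre symbol mod `q` of the number of divisors of `n`. -/
noncomputable def lamq (q : ℕ) [Fact q.Prime] (n : ℕ) : ℂ :=
  (legendreSym q (n.divisors.card : ℤ) : ℂ)

/-!
`λ_q` is multiplicative with `λ_q(p^e) = ((e+1)/q)`, so the Euler factor of `L(s, λ_q)` at `p` is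
`∑_e ((e+1)/q) x^e` with `x = p^{-s}`. The coefficients are `q`-periodic, so multiplying by
`1 - x^q` cuts the series down to its first period, and multiplying by `1 - x` then telescopes it
into `∑_{m<q} (((m+1)/q) - (m/q)) x^m`, since `(0/q) = (q/q) = 0`. For `q ≡ ±1 (mod 24)` both `2`
and `3` are squares mod `q`, so `(1/q) = (2/q) = (3/q) = (4/q)` and the terms `m = 1, 2, 3` vanish.
Finally `(1 - p^{-qs})⁻¹` and `(1 - p^{-s})⁻¹` are the Euler factors of `ζ(qs)` and `ζ(s)`.
-/

open Finset

section PowerSeries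

variable {R : Type*} [Ring R]

theorem sum_range_succ_mul_pow_mul_one_sub (c : ℕ → R) (x : R) (n : ℕ) :
    (∑ e ∈ range n, c (e + 1) * x ^ e) * (1 - x) =
      c 0 + ∑ e ∈ range n, (c (e + 1) - c e) * x ^ e - c n * x ^ n := by
  induction n with
  | zero => simp
  | succ n ih =>
    rw [sum_range_succ, add_mul, ih, sum_range_succ, pow_succ]
    noncomm_ring

variable [TopologicalSpace R] [IsTopologicalRing R] [T2Space R]

theorem tsum_mul_pow_mul_one_sub_pow_of_periodic {a : ℕ → R} {q : ℕ}
    (ha : Function.Periodic a q) {x : R} (hsum : Summable fun e ↦ a e * x ^ e) :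
    (∑' e, a e * x ^ e) * (1 - x ^ q) = ∑ e ∈ range q, a e * x ^ e := by
  have hshift : ∑' e, a (e + q) * x ^ (e + q) = (∑' e, a e * x ^ e) * x ^ q := by
    simp only [ha _, pow_add, ← mul_assoc]
    exact hsum.tsum_mul_right _
  rw [mul_sub, mul_one, ← hshift, ← hsum.sum_add_tsum_nat_add q, add_sub_cancel_right]

end PowerSeries

section Legendre

variable {q : ℕ} [Fact q.Prime]

theorem norm_legendreSym_le_one (a : ℤ) : ‖(legendreSym q a : ℂ)‖ ≤ 1 := by
  rcases eq_or_ne (a : ZMod q) 0 with h | h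
  · simp [(legendreSym.eq_zero_iff q a).mpr h]
  · rcases legendreSym.eq_one_or_neg_one q h with h' | h' <;> simp [h']

theorem legendreSym_natCast_periodic :
    Function.Periodic (fun n : ℕ ↦ (legendreSym q n : ℂ)) q := by
  intro n
  simp only [Nat.cast_add, legendreSym.mod q ((n : ℤ) + q), Int.add_emod_right, ← legendreSym.mod]

theorem legendreSym_two_eq_one (hq : q % 8 = 1 ∨ q % 8 = 7) : legendreSym q 2 = 1 := by
  have h2 : ((2 : ℤ) : ZMod q) ≠ 0 := by
    intro h
    have := Int.le_of_dvd (by norm_num) ((ZMod.intCast_zmod_eq_zero_iff_dvd 2 q).mp h)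
    have := (Fact.out : q.Prime).two_le
    omega
  rw [legendreSym.eq_one_iff q h2]
  exact_mod_cast (ZMod.exists_sq_eq_two_iff (p := q) (by omega)).mpr hq

theorem legendreSym_three_eq_one (hq : q % 12 = 1 ∨ q % 12 = 11) : legendreSym q 3 = 1 := by
  have h3q : legendreSym 3 q = if q % 12 = 1 then 1 else -1 := by
    rw [legendreSym.mod]
    rcases hq with h | h
    · rw [if_pos h, show (q : ℤ) % ((3 : ℕ) : ℤ) = 1 by push_cast; omega]
      rfl
    · rw [if_neg (by omega), show (q : ℤ) % ((3 : ℕ) : ℤ) = 2 by push_cast; omega]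
      decide
  rcases hq with h | h
  · rw [if_pos h, legendreSym.quadratic_reciprocity_one_mod_four (by omega) (by norm_num)] at h3q
    exact_mod_cast h3q
  · rw [if_neg (by omega),
      legendreSym.quadratic_reciprocity_three_mod_four (by omega) (by norm_num)] at h3q
    exact_mod_cast neg_inj.mp h3q

end Legendre

/-- The Euler factor of `L(s, λ_q) / (ζ(qs) ζ(s))` at `p`, as a polynomial in `x = p^{-s}`. -/
noncomputable def lamqEulerPoly (q : ℕ) [Fact q.Prime] (x : ℂ) : ℂ :=
  1 + ∑ m ∈ Icc 4 (q - 1), ((legendreSym q ((m : ℤ) + 1) - legendreSym q (m : ℤ) : ℤ) : ℂ) * x ^ m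

section LocalFactor

variable {q : ℕ} [Fact q.Prime]

theorem sum_range_legendreSym_sub_mul_pow (hq : q % 24 = 1 ∨ q % 24 = 23) (x : ℂ) :
    ∑ e ∈ range q, ((legendreSym q ↑(e + 1) : ℂ) - legendreSym q e) * x ^ e =
      lamqEulerPoly q x := by
  have hq4 : 4 ≤ q := by have := (Fact.out : q.Prime).two_le; omega
  have h4 : legendreSym q 4 = 1 := by
    rw [show (4 : ℤ) = 2 * 2 by norm_num, legendreSym.mul, legendreSym_two_eq_one (by omega)]
    rfl
  rw [← sum_range_add_sum_Ico _ hq4, lamqEulerPoly,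
    show Icc 4 (q - 1) = Ico 4 q by ext; simp; omega]
  simp [sum_range_succ, legendreSym.at_one, legendreSym_two_eq_one (q := q) (by omega),
    legendreSym_three_eq_one (q := q) (by omega), h4]

theorem tsum_legendreSym_mul_pow_mul_eq_lamqEulerPoly (hq : q % 24 = 1 ∨ q % 24 = 23) {x : ℂ}
    (hx : ‖x‖ < 1) :
    (∑' e : ℕ, (legendreSym q ↑(e + 1) : ℂ) * x ^ e) * (1 - x ^ q) * (1 - x) =
      lamqEulerPoly q x := by
  have hsum : Summable fun e : ℕ ↦ (legendreSym q ↑(e + 1) : ℂ) * x ^ e := by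
    refine Summable.of_norm_bounded (summable_geometric_of_lt_one (norm_nonneg x) hx) fun e ↦ ?_
    rw [norm_mul, norm_pow]
    exact mul_le_of_le_one_left (by positivity) (norm_legendreSym_le_one _)
  rw [tsum_mul_pow_mul_one_sub_pow_of_periodic (legendreSym_natCast_periodic.add_const 1) hsum,
    sum_range_succ_mul_pow_mul_one_sub (fun n : ℕ ↦ (legendreSym q n : ℂ)),
    sum_range_legendreSym_sub_mul_pow hq]
  simp [legendreSym.eq_zero_iff]

end LocalFactor

section EulerProduct

theorem Complex.cpow_neg_natCast_mul (z s : ℂ) (n : ℕ) : z ^ (-(n * s)) = (z ^ (-s)) ^ n := by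
  rw [← mul_neg, cpow_nat_mul]

theorem LSeries.term_mul_of_coprime {f : ℕ → ℂ}
    (hf : ∀ {m n : ℕ}, m.Coprime n → f (m * n) = f m * f n) (s : ℂ) {m n : ℕ}
    (h : m.Coprime n) : term f s (m * n) = term f s m * term f s n := by
  rcases eq_or_ne m 0 with rfl | hm
  · simp
  rcases eq_or_ne n 0 with rfl | hn
  · simp
  rw [term_of_ne_zero (mul_ne_zero hm hn), term_of_ne_zero hm, term_of_ne_zero hn, hf h,
    Nat.cast_mul, Complex.natCast_mul_natCast_cpow, mul_div_mul_comm]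

theorem LSeries_eulerProduct_hasProd_of_mul_coprime {f : ℕ → ℂ} (hf₁ : f 1 = 1)
    (hf : ∀ {m n : ℕ}, m.Coprime n → f (m * n) = f m * f n) {s : ℂ}
    (hs : LSeriesSummable f s) :
    HasProd (fun p : Nat.Primes ↦ ∑' e, LSeries.term f s (p ^ e)) (LSeries f s) :=
  EulerProduct.eulerProduct_hasProd (by simp [hf₁]) (LSeries.term_mul_of_coprime hf s)
    hs.norm (LSeries.term_zero f s)

end EulerProduct

section lamq

variable {q : ℕ} [Fact q.Prime]

theorem lamq_one : lamq q 1 = 1 := by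
  simp [lamq, legendreSym.at_one]

theorem lamq_mul_of_coprime {m n : ℕ} (h : m.Coprime n) :
    lamq q (m * n) = lamq q m * lamq q n := by
  simp only [lamq, h.card_divisors_mul, Nat.cast_mul, legendreSym.mul, Int.cast_mul]

theorem lamq_prime_pow {p : ℕ} (hp : p.Prime) (e : ℕ) :
    lamq q (p ^ e) = legendreSym q ↑(e + 1) := by
  simp [lamq, Nat.divisors_prime_pow hp]

theorem LSeriesSummable_lamq {s : ℂ} (hs : 1 < s.re) : LSeriesSummable (lamq q) s :=
  LSeriesSummable_of_bounded_of_one_lt_re (m := 1) (fun _ _ ↦ norm_legendreSym_le_one _) hs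

theorem LSeries.term_lamq_prime_pow (s : ℂ) {p : ℕ} (hp : p.Prime) (e : ℕ) :
    term (lamq q) s (p ^ e) = legendreSym q ↑(e + 1) * ((p : ℂ) ^ (-s)) ^ e := by
  rw [term_of_ne_zero (pow_ne_zero e hp.ne_zero), lamq_prime_pow hp, Nat.cast_pow,
    ← Complex.natCast_cpow_natCast_mul, ← Complex.cpow_neg_natCast_mul, Complex.cpow_neg,
    div_eq_mul_inv]

end lamq

theorem dirichlet_series_lamq_pm1_mod24 (q : ℕ) [Fact q.Prime]
    (hq : q % 24 = 1 ∨ q % 24 = 23) (s : ℂ) (hs : 1 < s.re) :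
    LSeries (lamq q) s =
      riemannZeta (q * s) * riemannZeta s *
        ∏' p : Nat.Primes,
          (1 + ∑ m ∈ Finset.Icc 4 (q - 1),
            ((legendreSym q ((m : ℤ) + 1) - legendreSym q (m : ℤ) : ℤ) : ℂ) *
              ((p : ℕ) : ℂ) ^ (-((m : ℂ) * s))) := by
  have hqs : 1 < ((q : ℂ) * s).re := by
    have : (1 : ℝ) ≤ q := by exact_mod_cast (Fact.out : q.Prime).one_le
    rw [← Complex.ofReal_natCast, Complex.re_ofReal_mul]
    nlinarith
  have hL := LSeries_eulerProduct_hasProd_of_mul_coprime (lamq_one (q := q)) lamq_mul_of_coprime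
    (LSeriesSummable_lamq hs)
  have hζq := (riemannZeta_eulerProduct_hasProd hqs).inv₀ (riemannZeta_ne_zero_of_one_lt_re hqs)
  have hζ := (riemannZeta_eulerProduct_hasProd hs).inv₀ (riemannZeta_ne_zero_of_one_lt_re hs)
  have hpoly : HasProd (fun p : Nat.Primes ↦ lamqEulerPoly q ((p : ℂ) ^ (-s)))
      (LSeries (lamq q) s * (riemannZeta (q * s))⁻¹ * (riemannZeta s)⁻¹) := by
    convert (hL.mul hζq).mul hζ using 1
    funext p
    simp only [LSeries.term_lamq_prime_pow s p.prop, inv_inv, Complex.cpow_neg_natCast_mul]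
    exact (tsum_legendreSym_mul_pow_mul_eq_lamqEulerPoly hq
      ((Complex.norm_prime_cpow_le_one_half p hs).trans_lt (by norm_num))).symm
  simp only [Complex.cpow_neg_natCast_mul]
  change _ = _ * _ * ∏' p : Nat.Primes, lamqEulerPoly q ((p : ℂ) ^ (-s))
  rw [hpoly.tprod_eq]
  field_simp [riemannZeta_ne_zero_of_one_lt_re hqs, riemannZeta_ne_zero_of_one_lt_re hs]
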